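/- arXiv:2305.09557 — 2 statements merged into one kernel-verified Lean document; each statement's English description precedes it below -/
import Mathlib

section
/- Let X = {x_1, …, x_m} ⊆ ℝ^d be a bag of examples such that the j₀-th coordinate is identical across the bag, i.e., x_{i,j₀} = x_{1,j₀} for all i ∈ [m]. Let y_1, …, y_m ∈ ℝ be the labels of the examples and ȳ = (1/m) Σ_{i∈[m]} y_i their aggregate label. Let the loss function be ℓ(y, ŷ) = b(ŷ) − y·ŷ + c(y) with b : ℝ → ℝ differentiable, and let the model be the additive model ŷ_i = f(x_i; β) = Σ_{j∈[p]} f_j(x_{i,j}; β_j) with p = d, where β = (β_1, …, β_p) ∈ ℝ^p and each sub-model f_j(x_j; β_j) is differentiable in its parameter β_j. Then (1/m) Σ_{i∈[m]} ∂ℓ(y_i, ŷ_i)/∂β_{j₀} = (∂f_{j₀}(x_{1,j₀}; β_{j₀})/∂β_{j₀}) · ((1/m) Σ_{i∈[m]} b′(ŷ_i) − ȳ). -/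
/-!
Moving only `β j₀` changes an additive model by the sub-model `f j₀` alone, and that sub-model
sees the same input `x i j₀` on every example of the bag, so each per-example gradient factors as
`∂f_{j₀} · (b'(ŷᵢ) - yᵢ)` with a common first factor. The loss is linear in the label, so averaging
over the bag replaces the labels by their mean.
-/

open Finset

section AdditiveModel

variable {ι 𝕜 F : Type*} [Fintype ι] [DecidableEq ι] [NontriviallyNormedField 𝕜]
  [NormedAddCommGroup F] [NormedSpace 𝕜 F]

theorem hasDerivAt_sum_apply_update {g : ι → 𝕜 → F} {β : ι → 𝕜} {j₀ : ι} {D : F}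
    (hg : HasDerivAt (g j₀) D (β j₀)) :
    HasDerivAt (fun t => ∑ j, g j (Function.update β j₀ t j)) D (β j₀) := by
  have hsplit : (fun t => ∑ j, g j (Function.update β j₀ t j))
      = fun t => g j₀ t + ∑ j ∈ univ \ {j₀}, g j (β j) := by
    funext t
    simp only [Function.apply_update g β j₀ t, sum_update_of_mem (mem_univ j₀)]
  rw [hsplit]
  exact hg.add_const _

end AdditiveModel

theorem hasDerivAt_semilinear_loss_comp {b u : ℝ → ℝ} {b'u u' t₀ : ℝ} (z c : ℝ)
    (hb : HasDerivAt b b'u (u t₀)) (hu : HasDerivAt u u' t₀) :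
    HasDerivAt (fun t => b (u t) - z * u t + c) ((b'u - z) * u') t₀ := by
  rw [sub_mul]
  exact ((hb.comp t₀ hu).sub (hu.const_mul z)).add_const c

/-- **Lossless Aggregate Learning, Simplest Version.**
A bag of `m` examples in `ℝ^p` (with `p = d`) whose `j₀`-th coordinate is constant,
a scalar semilinear loss `loss (y, ŷ) = b ŷ - y * ŷ + c y`, and an additive model
`yhat i = ∑ j, f j (x i j) (β j)`.  The average over the bag of the partial derivative of
the loss with respect to `β j₀` can be computed from the aggregate label `ybar` alone. -/
theorem lossless_aggregate_learning_simplest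
    {m p : ℕ} (hm : 0 < m) (j₀ : Fin p)
    (x : Fin m → Fin p → ℝ) (y : Fin m → ℝ) (β : Fin p → ℝ)
    (b b' c : ℝ → ℝ)
    (hb : ∀ t : ℝ, HasDerivAt b (b' t) t)
    (f : Fin p → ℝ → ℝ → ℝ)
    (hf : ∀ (j : Fin p) (v : ℝ), DifferentiableAt ℝ (f j v) (β j))
    (hx : ∀ i : Fin m, x i j₀ = x ⟨0, hm⟩ j₀)
    (loss : ℝ → ℝ → ℝ)
    (hloss : ∀ z w : ℝ, loss z w = b w - z * w + c z)
    (yhat : Fin m → ℝ) (hyhat : ∀ i, yhat i = ∑ j, f j (x i j) (β j))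
    (ybar : ℝ) (hybar : ybar = (1 / m : ℝ) * ∑ i, y i) :
    (1 / m : ℝ) *
        ∑ i, deriv (fun t : ℝ =>
          loss (y i) (∑ j, f j (x i j) (Function.update β j₀ t j))) (β j₀)
      = deriv (fun t : ℝ => f j₀ (x ⟨0, hm⟩ j₀) t) (β j₀) *
          ((1 / m : ℝ) * ∑ i, b' (yhat i) - ybar) := by
  set D := deriv (fun t : ℝ => f j₀ (x ⟨0, hm⟩ j₀) t) (β j₀)
  have hgrad : ∀ i, deriv (fun t : ℝ =>
      loss (y i) (∑ j, f j (x i j) (Function.update β j₀ t j))) (β j₀)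
        = (b' (yhat i) - y i) * D := by
    intro i
    have hmodel : HasDerivAt (fun t => ∑ j, f j (x i j) (Function.update β j₀ t j)) D (β j₀) :=
      hasDerivAt_sum_apply_update (g := fun j => f j (x i j)) (by
        rw [hx i]
        exact (hf j₀ _).hasDerivAt)
    have hyhat_i : ∑ j, f j (x i j) (Function.update β j₀ (β j₀) j) = yhat i := by
      simp [hyhat i]
    simp only [hloss]
    exact (hasDerivAt_semilinear_loss_comp (y i) (c (y i))
      (hyhat_i ▸ hb (yhat i)) hmodel).deriv
  rw [sum_congr rfl fun i _ => hgrad i, ← sum_mul, sum_sub_distrib, hybar]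
  ring
end

section
/- Let S_train be a finite training set of pairs (x, y), where x has d features (coordinates) and y ∈ ℝ^K. Let ℓ(y, ŷ) = b(ŷ) − T(y)ᵀ ŷ + c(y) be a semilinear loss with b : ℝ^K → ℝ differentiable, and let the model be the generalized additive model ŷ = f(x; β) = Σ_{j∈[n_E]} f_j(x_{E′_j}; β_{E_j}) ∈ ℝ^K, where β ∈ ℝ^p, each E_j ⊆ [p] indexes parameter entries, each E′_j ⊆ [d] indexes feature entries, each f_j is differentiable in β_{E_j}, and ⋃_{j∈[n_E]} E_j = [p]. Let 𝒞 = {C_1, …, C_{|𝒞|}} be feature-column subsets of [d], and suppose that for every j ∈ [n_E] there exists φ(j) ∈ [|𝒞|] with E′_j ⊆ C_{φ(j)}. For a feature set C, let CuratedBags(C) be the collection of pairs (X, ȳ), where the bags X partition the examples of S_train according to their value combination on the features in C, and ȳ = (1/|X|) Σ_{(x,y): x∈X} T(y) is the bag's aggregate label. For a bag X ∈ CuratedBags(C_{φ(j)}), let E′_j(X) denote the common sub-vector x_{E′_j} shared by all x ∈ X. Then for every parameter index j₀ ∈ [p]: Σ_{(x,y)∈S_train} ∂ℓ(y, ŷ)/∂β_{j₀}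 = Σ_{j∈[n_E]: j₀∈E_j} Σ_{(X, ȳ)∈CuratedBags(C_{φ(j)})} (∂f_j(E′_j(X); β_{E_j})/∂β_{j₀})ᵀ Σ_{x∈X} (∇_ŷ b(ŷ) − ȳ), where ŷ = f(x; β) is the prediction on x. In particular, the full-data gradient computed from individual labels is recoverable from the aggregate labels alone. -/
open Finset

/-- Summing bagwise over the fibers of a key function equals summing over everything. -/
lemma sum_image_fiber {ι κ M : Type*} [Fintype ι] [DecidableEq ι] [DecidableEq κ]
    [AddCommMonoid M] (key : ι → κ) (h : ι → M) :
    ∑ X ∈ Finset.image (fun i => Finset.univ.filter (fun i' => key i' = key i)) Finset.univ,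
      ∑ i ∈ X, h i = ∑ i, h i := by
  have himg : Finset.image (fun i => Finset.univ.filter (fun i' => key i' = key i)) Finset.univ
      = Finset.image (fun v => Finset.univ.filter (fun i' => key i' = v))
          (Finset.image key Finset.univ) := by
    rw [Finset.image_image]
    rfl
  have hinj : ∀ v₁ ∈ Finset.image key Finset.univ, ∀ v₂ ∈ Finset.image key Finset.univ,
      Finset.univ.filter (fun i' => key i' = v₁) = Finset.univ.filter (fun i' => key i' = v₂)
        → v₁ = v₂ := by
    intro v₁ hv₁ v₂ hv₂ hEq
    obtain ⟨i, -, rfl⟩ := Finset.mem_image.mp hv₁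
    have hi : i ∈ Finset.univ.filter (fun i' => key i' = v₂) := by
      rw [← hEq]; simp
    simpa using (Finset.mem_filter.mp hi).2
  rw [himg, Finset.sum_image hinj]
  exact Finset.sum_fiberwise_of_maps_to
    (fun i _ => Finset.mem_image_of_mem key (Finset.mem_univ i)) h

/-- Bags by value combinations on columns partition everything (summation form). -/
lemma sum_bags {N d : ℕ} {α : Type*} [DecidableEq α] (xdata : Fin N → Fin d → α)
    (cols : Finset (Fin d)) {M : Type*} [AddCommMonoid M] (h : Fin N → M) :
    ∑ X ∈ Finset.image (fun i => Finset.univ.filter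
        (fun i' => ∀ col ∈ cols, xdata i' col = xdata i col)) Finset.univ,
      ∑ i ∈ X, h i = ∑ i, h i := by
  classical
  have hiff : ∀ i i' : Fin N, ((∀ col ∈ cols, xdata i' col = xdata i col) ↔
      (fun c : ↥cols => xdata i' c) = (fun c : ↥cols => xdata i c)) := by
    intro i i'
    rw [funext_iff]
    constructor
    · intro H c; exact H c c.2
    · intro H col hc; exact H ⟨col, hc⟩
  have hfun : (fun i => Finset.univ.filter
        (fun i' => ∀ col ∈ cols, xdata i' col = xdata i col))
      = fun i => Finset.univ.filter
        (fun i' => (fun c : ↥cols => xdata i' c) = (fun c : ↥cols => xdata i c)) := by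
    funext i
    exact Finset.filter_congr (fun i' _ => hiff i i')
  rw [hfun]
  exact sum_image_fiber (fun i (c : ↥cols) => xdata i c) h

/-- **Lossless Aggregate Learning (general version).**
Training data `(xdata i, ydata i)` with `d` categorical features (values in `α`) and labels
in `ℝ^K`; a semilinear loss `loss y ŷ = b ŷ - ⟨T y, ŷ⟩ + c y` with `Db v` the Fréchet
derivative of `b` at `v` (so `Db v (Pi.single k 1)` is the `k`-th entry of `∇b(v)`);
a generalized additive model `pred i = fun k => ∑ j, f j (xdata i) β k` where the sub-model
`f j` depends only on the feature columns `E' j` of `x` and the parameter entries `E j` of `β`,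
with `⋃ j, E j = [p]` and `E' j ⊆ C (φ j)`.  The bags `bags c` are obtained by partitioning
the training indices by the value combination on the feature columns `c`; `aggy X` is the
aggregate (average transformed) label of a bag `X`, and `rep X ∈ X` is a representative of
the bag.  Then for every parameter index `j₀`, the full-data gradient of the loss with respect
to `β j₀` equals the expression on the right-hand side, which depends only on the bags, their
aggregate labels, and the model. -/
theorem lossless_aggregate_learning_general
    {N d K p nE nC : ℕ} {α : Type*} [DecidableEq α]
    (xdata : Fin N → Fin d → α) (ydata : Fin N → Fin K → ℝ)
    (b : (Fin K → ℝ) → ℝ) (Db : (Fin K → ℝ) → (Fin K → ℝ) →L[ℝ] ℝ)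
    (hb : ∀ v, HasFDerivAt b (Db v) v)
    (T : (Fin K → ℝ) → Fin K → ℝ) (c : (Fin K → ℝ) → ℝ)
    (loss : (Fin K → ℝ) → (Fin K → ℝ) → ℝ)
    (hloss : ∀ y yhat, loss y yhat = b yhat - ∑ k, T y k * yhat k + c y)
    (f : Fin nE → (Fin d → α) → (Fin p → ℝ) → Fin K → ℝ)
    (E : Fin nE → Finset (Fin p)) (E' : Fin nE → Finset (Fin d))
    (hdepx : ∀ j x x' β, (∀ i ∈ E' j, x i = x' i) → f j x β = f j x' β)
    (hdepβ : ∀ j x β β', (∀ i ∈ E j, β i = β' i) → f j x β = f j x β')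
    (hcover : ∀ i : Fin p, ∃ j : Fin nE, i ∈ E j)
    (C : Fin nC → Finset (Fin d)) (φ : Fin nE → Fin nC)
    (hφ : ∀ j, E' j ⊆ C (φ j))
    (β : Fin p → ℝ) (j₀ : Fin p)
    (hdiff : ∀ (j : Fin nE) (x : Fin d → α) (k : Fin K),
      DifferentiableAt ℝ (fun t : ℝ => f j x (Function.update β j₀ t) k) (β j₀))
    (rep : Finset (Fin N) → Fin N)
    (hrep : ∀ X : Finset (Fin N), X.Nonempty → rep X ∈ X)
    (bags : Finset (Fin d) → Finset (Finset (Fin N)))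
    (hbags : ∀ cols : Finset (Fin d), bags cols =
      Finset.image
        (fun i => Finset.univ.filter (fun i' => ∀ col ∈ cols, xdata i' col = xdata i col))
        Finset.univ)
    (pred : Fin N → Fin K → ℝ)
    (hpred : ∀ i, pred i = fun k => ∑ j, f j (xdata i) β k)
    (aggy : Finset (Fin N) → Fin K → ℝ)
    (haggy : ∀ X : Finset (Fin N),
      aggy X = fun k => (X.card : ℝ)⁻¹ * ∑ i ∈ X, T (ydata i) k) :
    ∑ i, deriv (fun t : ℝ =>
        loss (ydata i) (fun k => ∑ j, f j (xdata i) (Function.update β j₀ t) k)) (β j₀)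
      = ∑ j ∈ Finset.univ.filter (fun j : Fin nE => j₀ ∈ E j),
          ∑ X ∈ bags (C (φ j)),
            ∑ k, deriv (fun t : ℝ => f j (xdata (rep X)) (Function.update β j₀ t) k) (β j₀)
              * (∑ i ∈ X, (Db (pred i) (Pi.single k 1) - aggy X k)) := by
  classical
  -- Abbreviations
  set D : Fin N → Fin nE → Fin K → ℝ :=
    fun i j k => deriv (fun t : ℝ => f j (xdata i) (Function.update β j₀ t) k) (β j₀) with hD
  set G : Fin N → Fin K → ℝ :=
    fun i k => Db (pred i) (Pi.single k 1) - T (ydata i) k with hG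
  set filt : Finset (Fin nE) := Finset.univ.filter (fun j : Fin nE => j₀ ∈ E j) with hfilt
  -- vanishing derivative for submodels not containing j₀
  have hzero : ∀ (i : Fin N) (j : Fin nE) (k : Fin K), j₀ ∉ E j → D i j k = 0 := by
    intro i j k hj
    have hconst : (fun t : ℝ => f j (xdata i) (Function.update β j₀ t) k)
        = fun _ : ℝ => f j (xdata i) β k := by
      funext t
      have : f j (xdata i) (Function.update β j₀ t) = f j (xdata i) β := by
        apply hdepβ
        intro i' hi'
        refine Function.update_of_ne ?_ t β
        rintro rfl
        exact hj hi'
      rw [this]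
    simp only [hD, hconst, deriv_const]
  -- Step 1: pointwise computation of the derivative of the loss
  have hstep1 : ∀ i : Fin N,
      deriv (fun t : ℝ =>
        loss (ydata i) (fun k => ∑ j, f j (xdata i) (Function.update β j₀ t) k)) (β j₀)
      = ∑ k, (∑ j ∈ filt, D i j k) * G i k := by
    intro i
    have hder : ∀ j k, HasDerivAt (fun t : ℝ => f j (xdata i) (Function.update β j₀ t) k)
        (D i j k) (β j₀) := fun j k => (hdiff j (xdata i) k).hasDerivAt
    have hsum : ∀ k, HasDerivAt (fun t : ℝ => ∑ j, f j (xdata i) (Function.update β j₀ t) k)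
        (∑ j, D i j k) (β j₀) := fun k => HasDerivAt.fun_sum (fun j _ => hder j k)
    set v : Fin K → ℝ := fun k => ∑ j, D i j k with hv
    have hpi : HasDerivAt (fun t : ℝ => (fun k => ∑ j, f j (xdata i) (Function.update β j₀ t) k))
        v (β j₀) := hasDerivAt_pi.mpr (fun k => hsum k)
    have hFβ : (fun k => ∑ j, f j (xdata i) (Function.update β j₀ (β j₀)) k) = pred i := by
      rw [Function.update_eq_self, hpred i]
    have hbF : HasDerivAt (fun t : ℝ =>
        b (fun k => ∑ j, f j (xdata i) (Function.update β j₀ t) k)) (Db (pred i) v) (β j₀) := by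
      have h1 := (hb ((fun k => ∑ j, f j (xdata i) (Function.update β j₀ (β j₀)) k))).comp_hasDerivAt
        (β j₀) hpi
      rw [hFβ] at h1
      exact h1
    have hTd : HasDerivAt (fun t : ℝ =>
        ∑ k, T (ydata i) k * (∑ j, f j (xdata i) (Function.update β j₀ t) k))
        (∑ k, T (ydata i) k * v k) (β j₀) :=
      HasDerivAt.fun_sum (fun k _ => (hsum k).const_mul _)
    have hall : HasDerivAt (fun t : ℝ =>
        loss (ydata i) (fun k => ∑ j, f j (xdata i) (Function.update β j₀ t) k))
        (Db (pred i) v - ∑ k, T (ydata i) k * v k) (β j₀) := by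
      simp only [hloss]
      exact (hbF.sub hTd).add_const _
    rw [hall.deriv]
    -- expand Db (pred i) v linearly
    have hvdecomp : v = ∑ k, v k • (Pi.single k 1 : Fin K → ℝ) := by
      funext k'
      simp [Finset.sum_apply, Pi.single_apply]
    have hDb : Db (pred i) v = ∑ k, v k * Db (pred i) (Pi.single k 1) := by
      conv_lhs => rw [hvdecomp]
      rw [map_sum]
      simp only [map_smul, smul_eq_mul]
    rw [hDb, ← Finset.sum_sub_distrib]
    refine Finset.sum_congr rfl (fun k _ => ?_)
    have hvk : v k = ∑ j ∈ filt, D i j k := by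
      rw [hv, hfilt]
      symm
      apply Finset.sum_subset (Finset.filter_subset _ _)
      intro j _ hj
      exact hzero i j k (by simpa using hj)
    rw [hvk, hG]
    ring
  simp only [hstep1]
  -- Step 2: swap sums
  have hswap : ∑ i, ∑ k, (∑ j ∈ filt, D i j k) * G i k
      = ∑ j ∈ filt, ∑ i, ∑ k, D i j k * G i k := by
    calc ∑ i, ∑ k, (∑ j ∈ filt, D i j k) * G i k
        = ∑ i, ∑ k, ∑ j ∈ filt, D i j k * G i k := by
          refine Finset.sum_congr rfl (fun i _ => Finset.sum_congr rfl (fun k _ => ?_))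
          rw [Finset.sum_mul]
      _ = ∑ i, ∑ j ∈ filt, ∑ k, D i j k * G i k :=
          Finset.sum_congr rfl (fun i _ => Finset.sum_comm)
      _ = ∑ j ∈ filt, ∑ i, ∑ k, D i j k * G i k := Finset.sum_comm
  rw [hswap]
  -- Step 3: per submodel j, the bagged sum recovers the individual sum
  refine Finset.sum_congr rfl (fun j hj => ?_)
  rw [hbags (C (φ j))]
  have hbagwise : ∀ X ∈ Finset.image (fun i => Finset.univ.filter
      (fun i' => ∀ col ∈ C (φ j), xdata i' col = xdata i col)) Finset.univ,
      (∑ k, D (rep X) j k * (∑ i ∈ X, (Db (pred i) (Pi.single k 1) - aggy X k)))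
      = ∑ i ∈ X, ∑ k, D i j k * G i k := by
    intro X hX
    obtain ⟨i₀, -, rfl⟩ := Finset.mem_image.mp hX
    set X := Finset.univ.filter (fun i' => ∀ col ∈ C (φ j), xdata i' col = xdata i₀ col) with hX'
    have hmem : ∀ i' : Fin N, i' ∈ X ↔ ∀ col ∈ C (φ j), xdata i' col = xdata i₀ col := by
      intro i'; simp [hX']
    have hne : X.Nonempty := ⟨i₀, (hmem i₀).mpr (fun _ _ => rfl)⟩
    have hrepX : rep X ∈ X := hrep X hne
    have hagree : ∀ i ∈ X, ∀ col ∈ C (φ j), xdata i col = xdata (rep X) col := by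
      intro i hi col hc
      exact ((hmem i).mp hi col hc).trans (((hmem (rep X)).mp hrepX col hc)).symm
    have hDconst : ∀ i ∈ X, ∀ k, D (rep X) j k = D i j k := by
      intro i hi k
      have : (fun t : ℝ => f j (xdata (rep X)) (Function.update β j₀ t) k)
          = fun t : ℝ => f j (xdata i) (Function.update β j₀ t) k := by
        funext t
        have := hdepx j (xdata i) (xdata (rep X)) (Function.update β j₀ t)
          (fun col hc => hagree i hi col (hφ j hc))
        rw [this]
      simp only [hD, this]
    have hcard : (X.card : ℝ) ≠ 0 :=
      Nat.cast_ne_zero.mpr (Finset.card_ne_zero_of_mem hrepX)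
    have haggysum : ∀ k, ∑ i ∈ X, (Db (pred i) (Pi.single k 1) - aggy X k)
        = ∑ i ∈ X, (Db (pred i) (Pi.single k 1) - T (ydata i) k) := by
      intro k
      rw [Finset.sum_sub_distrib, Finset.sum_sub_distrib]
      congr 1
      rw [Finset.sum_const, haggy, nsmul_eq_mul]
      field_simp
    calc ∑ k, D (rep X) j k * (∑ i ∈ X, (Db (pred i) (Pi.single k 1) - aggy X k))
        = ∑ k, ∑ i ∈ X, D (rep X) j k * (Db (pred i) (Pi.single k 1) - T (ydata i) k) := by
          refine Finset.sum_congr rfl (fun k _ => ?_)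
          rw [haggysum k, Finset.mul_sum]
      _ = ∑ i ∈ X, ∑ k, D (rep X) j k * (Db (pred i) (Pi.single k 1) - T (ydata i) k) :=
          Finset.sum_comm
      _ = ∑ i ∈ X, ∑ k, D i j k * G i k := by
          refine Finset.sum_congr rfl (fun i hi => Finset.sum_congr rfl (fun k _ => ?_))
          rw [hDconst i hi k, hG]
  rw [Finset.sum_congr rfl hbagwise]
  exact (sum_bags xdata (C (φ j)) (fun i => ∑ k, D i j k * G i k)).symm
end
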